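/- arXiv:2502.20187 — 3 statements merged into one kernel-verified Lean document; each statement's English description precedes it below -/
import Mathlib

section
/- The function r(t) = F^{1/3} (9/4 (t-α)² + Δ)^{1/3}, with F > 0 and Δ > 0, satisfies the effective Friedmann equation (ṙ/r)² = (F/r³)(1 - FΔ/r³) for all real t. -/
open Real

/-- r(t) = F^{1/3}(9/4 (t-α)² + Δ)^{1/3} satisfies the effective
Friedmann equation (ṙ/r)² = (F/r³)(1 - FΔ/r³) for all t. -/
theorem effective_friedmann (F Δ α : ℝ) (hF : 0 < F) (hΔ : 0 < Δ)
    (r : ℝ → ℝ)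
    (hr : ∀ t, r t = F ^ ((1:ℝ)/3) * (9/4 * (t - α)^2 + Δ) ^ ((1:ℝ)/3)) :
    ∀ t, (deriv r t / r t)^2 = F / (r t)^3 * (1 - F * Δ / (r t)^3) := by
  intro t
  have hre : r = fun s => F ^ ((1:ℝ)/3) * (9/4 * (s - α)^2 + Δ) ^ ((1:ℝ)/3) :=
    funext hr
  set G : ℝ := 9/4 * (t - α)^2 + Δ with hG
  have hGpos : 0 < G := by positivity
  have hFpos : (0:ℝ) < F ^ ((1:ℝ)/3) := rpow_pos_of_pos hF _
  -- derivative of the inner polynomial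
  have hderivg : HasDerivAt (fun s : ℝ => 9/4 * (s - α)^2 + Δ) (9/2 * (t - α)) t := by
    have h := (((hasDerivAt_id t).sub_const α).pow 2).const_mul (9/4 : ℝ)
    have h2 := h.add_const Δ
    exact h2.congr_deriv (by simp only [id_eq]; push_cast; ring)
  have hR : HasDerivAt r (F ^ ((1:ℝ)/3) *
      (9/2 * (t - α) * ((1:ℝ)/3) * G ^ ((1:ℝ)/3 - 1))) t := by
    have h1 := hderivg.rpow_const (p := (1:ℝ)/3) (Or.inl (ne_of_gt hGpos))
    have h2 := h1.const_mul (F ^ ((1:ℝ)/3))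
    rw [hre]
    convert h2 using 1
  have hd : deriv r t = F ^ ((1:ℝ)/3) *
      (9/2 * (t - α) * ((1:ℝ)/3) * G ^ ((1:ℝ)/3 - 1)) := hR.deriv
  have hrt : r t = F ^ ((1:ℝ)/3) * G ^ ((1:ℝ)/3) := hr t
  -- cube of r
  have hcube : (r t)^3 = F * G := by
    rw [hrt, mul_pow, ← rpow_natCast (F ^ ((1:ℝ)/3)) 3,
      ← rpow_natCast (G ^ ((1:ℝ)/3)) 3, ← rpow_mul hF.le, ← rpow_mul hGpos.le]
    norm_num
  -- the ratio ṙ/r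
  have hratio : deriv r t / r t = 3/2 * (t - α) / G := by
    rw [hd, hrt]
    rw [mul_div_mul_left _ _ (ne_of_gt hFpos)]
    rw [mul_div_assoc, ← rpow_sub hGpos]
    norm_num
    rw [rpow_neg_one]
    ring
  rw [hratio, hcube]
  have hGne : G ≠ 0 := ne_of_gt hGpos
  have hFne : F ≠ 0 := ne_of_gt hF
  field_simp
  rw [hG]
  ring
end

section
/- Any solution y(δ) of the ODE y''(δ) = (B/δ) y(δ) on (0, ε), B > 0, extends continuously to δ = 0 with a finite limit; in particular solutions of the radial Jacobi equation near the shell-crossing singularity remain bounded. (Concretely: y(δ) = c₁ √δ I₁(2√(Bδ)) + c₂ √δ K₁(2√(Bδ)) satisfies the ODE and has finite limit c₂/(2√B) as δ → 0⁺.) -/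
open Real Filter

/-- The modified Bessel function of the first kind of order 1,
I₁(x) = Σ_{k≥0} (x/2)^{2k+1}/(k!(k+1)!). -/
noncomputable def besselI1 (x : ℝ) : ℝ :=
  ∑' k : ℕ, (x / 2) ^ (2 * k + 1) / ((Nat.factorial k) * (Nat.factorial (k + 1)))


lemma aux_summable (x : ℝ) :
    Summable (fun k : ℕ => ((k : ℝ) + 1) * x ^ k / (Nat.factorial k : ℝ)) := by
  apply Summable.of_norm_bounded (Real.summable_pow_div_factorial (2 * |x|))
  intro k
  have h2 : ((k : ℝ) + 1) ≤ 2 ^ k := by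
    exact_mod_cast Nat.lt_two_pow_self (n := k)
  have e : ‖((k : ℝ) + 1) * x ^ k / (Nat.factorial k : ℝ)‖
      = ((k : ℝ) + 1) * |x| ^ k / (Nat.factorial k : ℝ) := by
    rw [Real.norm_eq_abs, abs_div, abs_mul, abs_pow,
      abs_of_nonneg (by positivity : (0:ℝ) ≤ (k : ℝ) + 1),
      abs_of_nonneg (by positivity : (0:ℝ) ≤ (Nat.factorial k : ℝ))]
  rw [e, mul_pow]
  gcongr

lemma aux_bound (B R : ℝ) (hR : 1 ≤ R) (k : ℕ) (y : ℝ) (hy : |y| ≤ R)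
    (m : ℕ) (hm : 1 ≤ (m : ℝ)) (j : ℕ) (hj : j ≤ k) (c : ℝ) (hc : |c| ≤ (k : ℝ) + 1) :
    |B ^ k * (c * y ^ j) / ((Nat.factorial k : ℝ) * (m : ℝ))|
      ≤ ((k : ℝ) + 1) * (|B| * R) ^ k / (Nat.factorial k : ℝ) := by
  have hR0 : (0:ℝ) ≤ R := le_trans zero_le_one hR
  have hyk : |y| ^ j ≤ R ^ k := by
    calc |y| ^ j ≤ R ^ j := pow_le_pow_left₀ (abs_nonneg y) hy j
    _ ≤ R ^ k := pow_le_pow_right₀ hR hj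
  have e : |B ^ k * (c * y ^ j) / ((Nat.factorial k : ℝ) * (m : ℝ))|
      = |B| ^ k * (|c| * |y| ^ j) / ((Nat.factorial k : ℝ) * (m : ℝ)) := by
    rw [abs_div, abs_mul, abs_mul, abs_pow, abs_pow,
      abs_of_nonneg (by positivity : (0:ℝ) ≤ (Nat.factorial k : ℝ) * (m : ℝ))]
  rw [e, mul_pow]
  calc |B| ^ k * (|c| * |y| ^ j) / ((Nat.factorial k : ℝ) * (m : ℝ))
      ≤ |B| ^ k * (((k:ℝ)+1) * R ^ k) / ((Nat.factorial k : ℝ) * 1) := by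
        gcongr
    _ = ((k : ℝ) + 1) * (|B| ^ k * R ^ k) / (Nat.factorial k : ℝ) := by ring

noncomputable def auxF (B t : ℝ) : ℝ :=
  ∑' k : ℕ, B ^ k * t ^ (k + 1) / ((Nat.factorial k) * (Nat.factorial (k + 1)))

noncomputable def auxG (B t : ℝ) : ℝ :=
  ∑' k : ℕ, B ^ k * t ^ k / ((Nat.factorial k) * (Nat.factorial k))

noncomputable def auxH (B t : ℝ) : ℝ :=
  ∑' k : ℕ, B ^ k * t ^ k / ((Nat.factorial k) * (Nat.factorial (k + 1)))

lemma hasDerivAt_auxF (B t : ℝ) : HasDerivAt (auxF B) (auxG B t) t := by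
  set R := |t| + 1 with hRdef
  have hR : 1 ≤ R := le_add_of_nonneg_left (abs_nonneg t)
  have hR0 : 0 < R := lt_of_lt_of_le one_pos hR
  have htR : t ∈ Metric.ball (0:ℝ) R :=
    mem_ball_zero_iff.2 (by rw [Real.norm_eq_abs, hRdef]; exact lt_add_one _)
  have H := hasDerivAt_tsum_of_isPreconnected (aux_summable (|B| * R))
    Metric.isOpen_ball (convex_ball (0:ℝ) R).isPreconnected
    (g := fun (k : ℕ) (z : ℝ) => B ^ k * z ^ (k + 1) / ((Nat.factorial k : ℝ) * (Nat.factorial (k+1) : ℝ)))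
    (g' := fun (k : ℕ) (z : ℝ) => B ^ k * (((k+1 : ℕ) : ℝ) * z ^ (k + 1 - 1)) / ((Nat.factorial k : ℝ) * (Nat.factorial (k+1) : ℝ)))
    (fun k z _ => ((hasDerivAt_pow (k+1) z).const_mul (B ^ k)).div_const
        ((Nat.factorial k : ℝ) * (Nat.factorial (k+1) : ℝ)))
    (fun k z hz => by
      rw [Real.norm_eq_abs]
      exact aux_bound B R hR k z (le_of_lt (by simpa using mem_ball_zero_iff.1 hz))
        (Nat.factorial (k+1)) (by exact_mod_cast (k+1).factorial_pos)
        (k + 1 - 1) (le_of_eq (Nat.succ_sub_one k))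
        (((k+1 : ℕ) : ℝ)) (by rw [abs_of_nonneg (by positivity)]; push_cast; exact le_refl _))
    (Metric.mem_ball_self hR0)
    (by
      apply summable_of_ne_finset_zero (s := (∅ : Finset ℕ))
      intro k _
      simp)
    htR
  have H' : HasDerivAt (auxF B)
      (∑' k : ℕ, B ^ k * (((k+1 : ℕ) : ℝ) * t ^ (k + 1 - 1)) / ((Nat.factorial k : ℝ) * (Nat.factorial (k+1) : ℝ))) t := H
  convert H' using 1
  rw [auxG]
  apply tsum_congr
  intro k
  have hfact : ((Nat.factorial (k+1) : ℝ)) = ((k : ℝ) + 1) * (Nat.factorial k : ℝ) := by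
    exact_mod_cast Nat.factorial_succ k
  have h1 : (Nat.factorial k : ℝ) ≠ 0 := by positivity
  have h2 : ((k : ℝ) + 1) ≠ 0 := by positivity
  simp only [Nat.add_sub_cancel]
  push_cast
  rw [hfact]
  field_simp

lemma hasDerivAt_auxG (B t : ℝ) : HasDerivAt (auxG B) (B * auxH B t) t := by
  set R := |t| + 1 with hRdef
  have hR : 1 ≤ R := le_add_of_nonneg_left (abs_nonneg t)
  have hR0 : 0 < R := lt_of_lt_of_le one_pos hR
  have htR : t ∈ Metric.ball (0:ℝ) R :=
    mem_ball_zero_iff.2 (by rw [Real.norm_eq_abs, hRdef]; exact lt_add_one _)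
  have hbd : ∀ (k : ℕ) (z : ℝ), |z| ≤ R →
      |B ^ k * ((k : ℝ) * z ^ (k - 1)) / ((Nat.factorial k : ℝ) * (Nat.factorial k : ℝ))|
      ≤ ((k : ℝ) + 1) * (|B| * R) ^ k / (Nat.factorial k : ℝ) := by
    intro k z hz
    exact aux_bound B R hR k z hz (Nat.factorial k) (by exact_mod_cast k.factorial_pos)
      (k - 1) (Nat.sub_le k 1) (k : ℝ)
      (by rw [abs_of_nonneg (by positivity)]; linarith)
  have H := hasDerivAt_tsum_of_isPreconnected (aux_summable (|B| * R))
    Metric.isOpen_ball (convex_ball (0:ℝ) R).isPreconnected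
    (g := fun (k : ℕ) (z : ℝ) => B ^ k * z ^ k / ((Nat.factorial k : ℝ) * (Nat.factorial k : ℝ)))
    (g' := fun (k : ℕ) (z : ℝ) => B ^ k * ((k : ℝ) * z ^ (k - 1)) / ((Nat.factorial k : ℝ) * (Nat.factorial k : ℝ)))
    (fun k z _ => ((hasDerivAt_pow k z).const_mul (B ^ k)).div_const
        ((Nat.factorial k : ℝ) * (Nat.factorial k : ℝ)))
    (fun k z hz => by
      rw [Real.norm_eq_abs]
      exact hbd k z (le_of_lt (by simpa using mem_ball_zero_iff.1 hz)))
    (Metric.mem_ball_self hR0)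
    (by
      apply summable_of_ne_finset_zero (s := ({0} : Finset ℕ))
      intro k hk
      have hk0 : k ≠ 0 := by simpa using hk
      simp [zero_pow hk0])
    htR
  have hsum : Summable (fun k : ℕ =>
      B ^ k * ((k : ℝ) * t ^ (k - 1)) / ((Nat.factorial k : ℝ) * (Nat.factorial k : ℝ))) := by
    apply Summable.of_norm_bounded (aux_summable (|B| * R))
    intro k
    rw [Real.norm_eq_abs]
    exact hbd k t (le_of_lt (lt_add_one |t|))
  have H' : HasDerivAt (auxG B)
      (∑' k : ℕ, B ^ k * ((k : ℝ) * t ^ (k - 1)) / ((Nat.factorial k : ℝ) * (Nat.factorial k : ℝ))) t := H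
  convert H' using 1
  rw [Summable.tsum_eq_zero_add hsum]
  simp only [Nat.cast_zero, zero_mul, mul_zero, zero_div, zero_add, pow_zero]
  rw [auxH, ← tsum_mul_left]
  apply tsum_congr
  intro j
  have hfact : ((Nat.factorial (j+1) : ℝ)) = ((j : ℝ) + 1) * (Nat.factorial j : ℝ) := by
    exact_mod_cast Nat.factorial_succ j
  have h1 : (Nat.factorial j : ℝ) ≠ 0 := by positivity
  have h2 : ((j : ℝ) + 1) ≠ 0 := by positivity
  simp only [Nat.add_sub_cancel]
  push_cast
  rw [hfact]
  field_simp
  ring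

lemma auxF_eq (B t : ℝ) : auxF B t = t * auxH B t := by
  rw [auxF, auxH, ← tsum_mul_left]
  apply tsum_congr
  intro k
  rw [pow_succ]
  ring

lemma auxF_zero (B : ℝ) : auxF B 0 = 0 := by
  rw [auxF]
  have h : ∀ k : ℕ, B ^ k * (0:ℝ) ^ (k + 1) / ((Nat.factorial k : ℝ) * (Nat.factorial (k+1) : ℝ)) = 0 := by
    intro k
    simp
  simp only [h]
  exact tsum_zero

lemma sqrt_besselI1 (B δ : ℝ) (hB : 0 ≤ B) (hδ : 0 ≤ δ) :
    Real.sqrt δ * besselI1 (2 * Real.sqrt (B * δ)) = Real.sqrt B * auxF B δ := by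
  rw [besselI1, auxF, ← tsum_mul_left, ← tsum_mul_left]
  apply tsum_congr
  intro k
  have h2 : 2 * Real.sqrt (B * δ) / 2 = Real.sqrt (B * δ) := by ring
  have hpow : Real.sqrt (B * δ) ^ (2 * k + 1)
      = (B * δ) ^ k * Real.sqrt (B * δ) := by
    rw [pow_succ, pow_mul, Real.sq_sqrt (mul_nonneg hB hδ)]
  rw [h2, hpow, Real.sqrt_mul hB δ, mul_pow]
  have hss : Real.sqrt δ * Real.sqrt δ = δ := Real.mul_self_sqrt hδ
  rw [pow_succ]
  have hc : ((Nat.factorial k : ℝ) * (Nat.factorial (k+1) : ℝ)) ≠ 0 := by positivity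
  field_simp
  linear_combination (Real.sqrt B * B ^ k * δ ^ k) * hss

/-- y(δ) = c₁ √δ I₁(2√(Bδ)) + c₂ √δ K₁(2√(Bδ)) solves the radial
Jacobi equation y'' = (B/δ) y on (0, ∞) and extends continuously to δ = 0 with the
finite limit c₂/(2√B). Here K₁ is the modified Bessel function of the second kind
of order 1, characterized as a smooth solution of the modified Bessel ODE of order 1
on (0, ∞) with x K₁(x) → 1 as x → 0⁺. -/
theorem jacobi_solution_bounded (B c₁ c₂ : ℝ) (hB : 0 < B)
    (K₁ : ℝ → ℝ)
    (hK₁smooth : ContDiffOn ℝ (⊤ : ℕ∞) K₁ (Set.Ioi 0))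
    (hK₁ode : ∀ x, 0 < x →
      x^2 * deriv (deriv K₁) x + x * deriv K₁ x - (x^2 + 1) * K₁ x = 0)
    (hK₁asymp : Tendsto (fun x => x * K₁ x) (nhdsWithin 0 (Set.Ioi 0)) (nhds 1))
    (y : ℝ → ℝ)
    (hy : ∀ δ, 0 < δ → y δ = c₁ * Real.sqrt δ * besselI1 (2 * Real.sqrt (B * δ))
                          + c₂ * Real.sqrt δ * K₁ (2 * Real.sqrt (B * δ))) :
    (∀ δ, 0 < δ → deriv (deriv y) δ = (B / δ) * y δ) ∧
    Tendsto y (nhdsWithin 0 (Set.Ioi 0)) (nhds (c₂ / (2 * Real.sqrt B))) := by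
  have hsB : Real.sqrt B * Real.sqrt B = B := Real.mul_self_sqrt hB.le
  have hsB0 : Real.sqrt B ≠ 0 := ne_of_gt (Real.sqrt_pos.2 hB)
  have hK1diff : ∀ x : ℝ, 0 < x → HasDerivAt K₁ (deriv K₁ x) x := fun x hx =>
    (((hK₁smooth.differentiableOn (by simp)).differentiableAt (Ioi_mem_nhds hx)).hasDerivAt)
  have hK2smooth : ContDiffOn ℝ (⊤ : ℕ∞) (deriv K₁) (Set.Ioi 0) :=
    hK₁smooth.deriv_of_isOpen isOpen_Ioi (mod_cast le_top)
  have hK2diff : ∀ x : ℝ, 0 < x → HasDerivAt (deriv K₁) (deriv (deriv K₁) x) x := fun x hx =>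
    (((hK2smooth.differentiableOn (by simp)).differentiableAt (Ioi_mem_nhds hx)).hasDerivAt)
  set w : ℝ → ℝ := fun t => Real.sqrt t * K₁ (2 * Real.sqrt (B * t)) with hw
  set w1 : ℝ → ℝ := fun t =>
    K₁ (2 * Real.sqrt (B * t)) / (2 * Real.sqrt t)
      + Real.sqrt B * deriv K₁ (2 * Real.sqrt (B * t)) with hw1
  have hsdiff : ∀ δ : ℝ, 0 < δ →
      HasDerivAt (fun t => 2 * Real.sqrt (B * t)) (1 / (2 * Real.sqrt (B * δ)) * B * 2) δ := by
    intro δ hδ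
    have h1 : HasDerivAt (fun t : ℝ => B * t) (B * 1) δ := (hasDerivAt_id δ).const_mul B
    have h2 := ((Real.hasDerivAt_sqrt (mul_pos hB hδ).ne').comp δ h1).const_mul 2
    refine h2.congr_deriv (Eq.symm ?_)
    ring
  have hspos : ∀ δ : ℝ, 0 < δ → 0 < 2 * Real.sqrt (B * δ) := by
    intro δ hδ
    have := Real.sqrt_pos.2 (mul_pos hB hδ)
    linarith
  have hsmul : ∀ δ : ℝ, Real.sqrt (B * δ) = Real.sqrt B * Real.sqrt δ := fun δ =>
    Real.sqrt_mul hB.le δ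
  have Hw : ∀ δ : ℝ, 0 < δ → HasDerivAt w (w1 δ) δ := by
    intro δ hδ
    have hsd : Real.sqrt δ * Real.sqrt δ = δ := Real.mul_self_sqrt hδ.le
    have hsd0 : Real.sqrt δ ≠ 0 := ne_of_gt (Real.sqrt_pos.2 hδ)
    have hKs : HasDerivAt (fun t => K₁ (2 * Real.sqrt (B * t)))
        (deriv K₁ (2 * Real.sqrt (B * δ)) * (1 / (2 * Real.sqrt (B * δ)) * B * 2)) δ :=
      (hK1diff _ (hspos δ hδ)).comp δ (hsdiff δ hδ)
    have h := (Real.hasDerivAt_sqrt hδ.ne').mul hKs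
    refine h.congr_deriv (Eq.symm ?_)
    simp only [hw1, hsmul]
    obtain ⟨d, hd⟩ : ∃ d, Real.sqrt δ = d := ⟨_, rfl⟩
    obtain ⟨s, hs⟩ : ∃ s, Real.sqrt B = s := ⟨_, rfl⟩
    rw [hd] at hsd hsd0 ⊢
    rw [hs] at hsB hsB0 ⊢
    rw [← hsB]
    field_simp
  have Hw1 : ∀ δ : ℝ, 0 < δ → HasDerivAt w1 ((B / δ) * w δ) δ := by
    intro δ hδ
    have hsd : Real.sqrt δ * Real.sqrt δ = δ := Real.mul_self_sqrt hδ.le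
    have hsd0 : Real.sqrt δ ≠ 0 := ne_of_gt (Real.sqrt_pos.2 hδ)
    have hKs : HasDerivAt (fun t => K₁ (2 * Real.sqrt (B * t)))
        (deriv K₁ (2 * Real.sqrt (B * δ)) * (1 / (2 * Real.sqrt (B * δ)) * B * 2)) δ :=
      (hK1diff _ (hspos δ hδ)).comp δ (hsdiff δ hδ)
    have hden : HasDerivAt (fun t : ℝ => 2 * Real.sqrt t) (2 * (1 / (2 * Real.sqrt δ))) δ :=
      (Real.hasDerivAt_sqrt hδ.ne').const_mul 2
    have hden0 : 2 * Real.sqrt δ ≠ 0 := by positivity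
    have h1 := hKs.div hden hden0
    have hK2s : HasDerivAt (fun t => deriv K₁ (2 * Real.sqrt (B * t)))
        (deriv (deriv K₁) (2 * Real.sqrt (B * δ)) * (1 / (2 * Real.sqrt (B * δ)) * B * 2)) δ :=
      HasDerivAt.comp (h₂ := deriv K₁) δ (hK2diff _ (hspos δ hδ)) (hsdiff δ hδ)
    have h := h1.add (hK2s.const_mul (Real.sqrt B))
    refine h.congr_deriv (Eq.symm ?_)
    have hode := hK₁ode (2 * Real.sqrt (B * δ)) (hspos δ hδ)
    simp only [hw, hsmul] at hode ⊢
    obtain ⟨d, hd⟩ : ∃ d, Real.sqrt δ = d := ⟨_, rfl⟩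
    obtain ⟨s, hs⟩ : ∃ s, Real.sqrt B = s := ⟨_, rfl⟩
    rw [hd] at hsd hsd0 ⊢
    rw [hs] at hsB hsB0 ⊢
    rw [hd, hs] at hode
    rw [← hsB, ← hsd]
    field_simp
    ring_nf at hode ⊢
    linear_combination (-1) * hode
  -- main assembly
  set g : ℝ → ℝ := fun t => c₁ * Real.sqrt B * auxF B t + c₂ * w t with hg
  set g1 : ℝ → ℝ := fun t => c₁ * Real.sqrt B * auxG B t + c₂ * w1 t with hg1
  have hyg : Set.EqOn y g (Set.Ioi 0) := by
    intro δ hδ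
    rw [Set.mem_Ioi] at hδ
    rw [hy δ hδ, hg]
    have hbi := sqrt_besselI1 B δ hB.le hδ.le
    simp only [hw]
    linear_combination c₁ * hbi
  have Hg : ∀ δ : ℝ, 0 < δ → HasDerivAt g (g1 δ) δ := fun δ hδ =>
    ((hasDerivAt_auxF B δ).const_mul (c₁ * Real.sqrt B)).add ((Hw δ hδ).const_mul c₂)
  have Hg1 : ∀ δ : ℝ, 0 < δ →
      HasDerivAt g1 (c₁ * Real.sqrt B * (B * auxH B δ) + c₂ * ((B / δ) * w δ)) δ := fun δ hδ =>
    ((hasDerivAt_auxG B δ).const_mul (c₁ * Real.sqrt B)).add ((Hw1 δ hδ).const_mul c₂)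
  constructor
  · intro δ hδ
    have h2 : Set.EqOn (deriv y) g1 (Set.Ioi 0) := by
      intro t ht
      have ht' : (0:ℝ) < t := ht
      have hyt : y =ᶠ[nhds t] g := eventuallyEq_of_mem (Ioi_mem_nhds ht') hyg
      rw [hyt.deriv_eq, (Hg t ht').deriv]
    have h3 : deriv y =ᶠ[nhds δ] g1 := eventuallyEq_of_mem (Ioi_mem_nhds hδ) h2
    rw [h3.deriv_eq, (Hg1 δ hδ).deriv]
    rw [hyg (Set.mem_Ioi.2 hδ)]
    simp only [hg, auxF_eq]
    have hδ0 : δ ≠ 0 := hδ.ne'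
    field_simp
  · have heq : Set.EqOn y
        (fun δ => c₁ * Real.sqrt B * auxF B δ
          + c₂ / (2 * Real.sqrt B) * ((2 * Real.sqrt (B * δ)) * K₁ (2 * Real.sqrt (B * δ))))
        (Set.Ioi 0) := by
      intro δ hδ
      have hδ' : (0:ℝ) < δ := hδ
      rw [hyg hδ, hg]
      simp only [hw, hsmul δ]
      field_simp
    have hEv : y =ᶠ[nhdsWithin 0 (Set.Ioi 0)]
        (fun δ => c₁ * Real.sqrt B * auxF B δ
          + c₂ / (2 * Real.sqrt B) * ((2 * Real.sqrt (B * δ)) * K₁ (2 * Real.sqrt (B * δ)))) :=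
      eventuallyEq_of_mem self_mem_nhdsWithin heq
    have T1 : Tendsto (fun δ => auxF B δ) (nhdsWithin 0 (Set.Ioi 0)) (nhds 0) := by
      have h := (hasDerivAt_auxF B 0).continuousAt.tendsto
      rw [auxF_zero] at h
      exact h.mono_left nhdsWithin_le_nhds
    have T2 : Tendsto (fun δ : ℝ => 2 * Real.sqrt (B * δ)) (nhdsWithin 0 (Set.Ioi 0))
        (nhdsWithin 0 (Set.Ioi 0)) := by
      apply tendsto_nhdsWithin_of_tendsto_nhds_of_eventually_within
      · have hc : Continuous (fun δ : ℝ => 2 * Real.sqrt (B * δ)) :=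
          continuous_const.mul (Real.continuous_sqrt.comp (continuous_const.mul continuous_id))
        have h := (hc.tendsto 0).mono_left (nhdsWithin_le_nhds (s := Set.Ioi 0))
        simpa using h
      · filter_upwards [self_mem_nhdsWithin] with δ hδ
        exact hspos δ hδ
    have T3 : Tendsto (fun δ : ℝ => (2 * Real.sqrt (B * δ)) * K₁ (2 * Real.sqrt (B * δ)))
        (nhdsWithin 0 (Set.Ioi 0)) (nhds 1) := hK₁asymp.comp T2
    have Tfin := (T1.const_mul (c₁ * Real.sqrt B)).add (T3.const_mul (c₂ / (2 * Real.sqrt B)))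
    have hval : c₁ * Real.sqrt B * 0 + c₂ / (2 * Real.sqrt B) * 1 = c₂ / (2 * Real.sqrt B) := by
      ring
    rw [hval] at Tfin
    exact Tendsto.congr' hEv.symm Tfin
end

section
/- The radial tidal identity: for r(R,t) = F^{1/3}(9/4(t-α)²+Δ)^{1/3} with all functions smooth, at any point where ∂_R r ≠ 0, one has ∂²_t ∂_R r / ∂_R r = (F/r³ − 10ΔF²/r⁶) + (∂_R F/∂_R r)(4ΔF/r⁵ − 1/(2r²)). -/
open Real

private lemma rpow_neg_third {x : ℝ} (hx : 0 < x) {p : ℝ} (n : ℕ) (hp : p = -(n : ℝ)/3) :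
    x ^ p = 1 / (x ^ ((1:ℝ)/3)) ^ n := by
  rw [hp, ← Real.rpow_natCast (x ^ ((1:ℝ)/3)) n, ← Real.rpow_mul hx.le, one_div,
    ← Real.rpow_neg hx.le]
  congr 1
  ring

private lemma cube_of_rpow {x : ℝ} (hx : 0 < x) : (x ^ ((1:ℝ)/3)) ^ (3:ℕ) = x := by
  rw [← Real.rpow_natCast (x ^ ((1:ℝ)/3)) 3, ← Real.rpow_mul hx.le]
  norm_num

set_option maxHeartbeats 2000000 in
/-- the radial tidal identity. For
r(R,t) = F(R)^{1/3}(9/4(t-α(R))² + Δ)^{1/3} with F, α smooth and F > 0, at any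
point where ∂_R r ≠ 0 one has
∂²_t ∂_R r / ∂_R r = (F/r³ − 10ΔF²/r⁶) + (∂_R F/∂_R r)(4ΔF/r⁵ − 1/(2r²)). -/
theorem radial_tidal_identity (Δ : ℝ) (hΔ : 0 < Δ)
    (F α : ℝ → ℝ) (hF : ContDiff ℝ (⊤ : ℕ∞) F) (hα : ContDiff ℝ (⊤ : ℕ∞) α)
    (hFpos : ∀ R, 0 < F R)
    (r : ℝ → ℝ → ℝ)
    (hr : ∀ R t, r R t = (F R) ^ ((1:ℝ)/3) * (9/4 * (t - α R)^2 + Δ) ^ ((1:ℝ)/3)) :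
    ∀ R t, deriv (fun R' => r R' t) R ≠ 0 →
      deriv (deriv (fun t' => deriv (fun R' => r R' t') R)) t
        / deriv (fun R' => r R' t) R
      = (F R / (r R t)^3 - 10 * Δ * (F R)^2 / (r R t)^6)
        + (deriv F R / deriv (fun R' => r R' t) R)
          * (4 * Δ * F R / (r R t)^5 - 1 / (2 * (r R t)^2)) := by
  intro R t hne
  have hApos : 0 < F R := hFpos R
  have hFd : HasDerivAt F (deriv F R) R := (hF.differentiable (by simp) R).hasDerivAt
  have hαd : HasDerivAt α (deriv α R) R := (hα.differentiable (by simp) R).hasDerivAt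
  set A : ℝ := F R with hA
  set A' : ℝ := deriv F R with hA'
  set B : ℝ := α R with hB
  set B' : ℝ := deriv α R with hB'
  set s : ℝ → ℝ := fun t' => 9/4 * (t' - B)^2 + Δ with hs_def
  have hspos : ∀ t', 0 < s t' := fun t' => by
    have h1 : (0:ℝ) ≤ 9/4 * (t' - B)^2 := by positivity
    simp only [hs_def]; linarith
  have e1 : (1:ℝ)/3 - 1 = -(2:ℝ)/3 := by norm_num
  have e2 : -(2:ℝ)/3 - 1 = -(5:ℝ)/3 := by norm_num
  have e3 : -(5:ℝ)/3 - 1 = -(8:ℝ)/3 := by norm_num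
  set c1 : ℝ := A' * A ^ (-(2:ℝ)/3) / 3 with hc1
  set c2 : ℝ := -(3/2) * A ^ ((1:ℝ)/3) * B' with hc2
  -- derivative of s
  have hsD : ∀ t', HasDerivAt s (9/2 * (t' - B)) t' := by
    intro t'
    have h := ((((hasDerivAt_id t').sub_const B).fun_pow 2).const_mul (9/4)).add_const Δ
    convert! h using 1
    simp only [id_eq]
    push_cast
    ring
  -- Step 1: the R-derivative of r, as a function of t
  have key : ∀ t', deriv (fun R' => r R' t') R
      = c1 * (s t') ^ ((1:ℝ)/3) + c2 * (t' - B) * (s t') ^ (-(2:ℝ)/3) := by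
    intro t'
    have hf1 : HasDerivAt (fun R' => (F R') ^ ((1:ℝ)/3))
        (A' * ((1:ℝ)/3) * A ^ ((1:ℝ)/3 - 1)) R := hFd.rpow_const (Or.inl hApos.ne')
    have hq : HasDerivAt (fun R' => 9/4 * (t' - α R')^2 + Δ)
        (-(9/2) * (t' - B) * B') R := by
      have h := ((((hasDerivAt_const R t').sub hαd).fun_pow 2).const_mul (9/4)).add_const Δ
      convert! h using 1
      simp only [Pi.sub_apply, ← hB]
      push_cast
      ring
    have hf2 : HasDerivAt (fun R' => (9/4 * (t' - α R')^2 + Δ) ^ ((1:ℝ)/3))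
        (-(9/2) * (t' - B) * B' * ((1:ℝ)/3) * (s t') ^ ((1:ℝ)/3 - 1)) R :=
      hq.rpow_const (Or.inl (hspos t').ne')
    have hfun : (fun R' => r R' t')
        = fun R' => (F R') ^ ((1:ℝ)/3) * (9/4 * (t' - α R')^2 + Δ) ^ ((1:ℝ)/3) :=
      funext fun R' => hr R' t'
    rw [hfun, (hf1.fun_mul hf2).deriv]
    show A' * ((1:ℝ)/3) * A ^ ((1:ℝ)/3 - 1) * (s t') ^ ((1:ℝ)/3)
        + A ^ ((1:ℝ)/3) * (-(9/2) * (t' - B) * B' * ((1:ℝ)/3) * (s t') ^ ((1:ℝ)/3 - 1)) = _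
    rw [e1, hc1, hc2]
    ring
  -- the function D(t) = ∂_R r
  have hDfun : (fun t' => deriv (fun R' => r R' t') R)
      = fun t' => c1 * (s t') ^ ((1:ℝ)/3) + c2 * (t' - B) * (s t') ^ (-(2:ℝ)/3) :=
    funext key
  -- Step 2: first t-derivative
  have hD : ∀ t', HasDerivAt
      (fun t' => c1 * (s t') ^ ((1:ℝ)/3) + c2 * (t' - B) * (s t') ^ (-(2:ℝ)/3))
      ((3/2 * c1) * ((t' - B) * (s t') ^ (-(2:ℝ)/3))
        + c2 * (s t') ^ (-(2:ℝ)/3)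
        + (-3 * c2) * ((t' - B)^2 * (s t') ^ (-(5:ℝ)/3))) t' := by
    intro t'
    have h1 : HasDerivAt (fun t' => (s t') ^ ((1:ℝ)/3))
        (9/2 * (t' - B) * ((1:ℝ)/3) * (s t') ^ ((1:ℝ)/3 - 1)) t' :=
      (hsD t').rpow_const (Or.inl (hspos t').ne')
    have h2 : HasDerivAt (fun t' => (s t') ^ (-(2:ℝ)/3))
        (9/2 * (t' - B) * (-(2:ℝ)/3) * (s t') ^ (-(2:ℝ)/3 - 1)) t' :=
      (hsD t').rpow_const (Or.inl (hspos t').ne')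
    have h3 : HasDerivAt (fun t' => c2 * (t' - B)) (c2 * 1) t' :=
      ((hasDerivAt_id t').sub_const B).const_mul c2
    have h := (h1.const_mul c1).fun_add (h3.fun_mul h2)
    convert! h using 1
    rw [e1, e2]
    ring
  have hEfun : deriv (fun t' => c1 * (s t') ^ ((1:ℝ)/3) + c2 * (t' - B) * (s t') ^ (-(2:ℝ)/3))
      = fun t' => (3/2 * c1) * ((t' - B) * (s t') ^ (-(2:ℝ)/3))
        + c2 * (s t') ^ (-(2:ℝ)/3)
        + (-3 * c2) * ((t' - B)^2 * (s t') ^ (-(5:ℝ)/3)) :=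
    funext fun t' => (hD t').deriv
  -- Step 3: second t-derivative at t
  have hG : HasDerivAt (fun t' => (3/2 * c1) * ((t' - B) * (s t') ^ (-(2:ℝ)/3))
        + c2 * (s t') ^ (-(2:ℝ)/3)
        + (-3 * c2) * ((t' - B)^2 * (s t') ^ (-(5:ℝ)/3)))
      ((3/2 * c1) * (1 * (s t) ^ (-(2:ℝ)/3)
          + (t - B) * (9/2 * (t - B) * (-(2:ℝ)/3) * (s t) ^ (-(2:ℝ)/3 - 1)))
        + c2 * (9/2 * (t - B) * (-(2:ℝ)/3) * (s t) ^ (-(2:ℝ)/3 - 1))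
        + (-3 * c2) * (((2:ℕ) * (t - B)^1 * 1) * (s t) ^ (-(5:ℝ)/3)
          + (t - B)^2 * (9/2 * (t - B) * (-(5:ℝ)/3) * (s t) ^ (-(5:ℝ)/3 - 1)))) t := by
    have h2 : HasDerivAt (fun t' => (s t') ^ (-(2:ℝ)/3))
        (9/2 * (t - B) * (-(2:ℝ)/3) * (s t) ^ (-(2:ℝ)/3 - 1)) t :=
      (hsD t).rpow_const (Or.inl (hspos t).ne')
    have h5 : HasDerivAt (fun t' => (s t') ^ (-(5:ℝ)/3))
        (9/2 * (t - B) * (-(5:ℝ)/3) * (s t) ^ (-(5:ℝ)/3 - 1)) t :=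
      (hsD t).rpow_const (Or.inl (hspos t).ne')
    have hu : HasDerivAt (fun t' => t' - B) (1:ℝ) t := (hasDerivAt_id t).sub_const B
    have hu2 : HasDerivAt (fun t' => (t' - B)^2) ((2:ℕ) * (t - B)^1 * 1) t := hu.pow 2
    exact (((hu.mul h2).const_mul (3/2 * c1)).add (h2.const_mul c2)).add
      ((hu2.mul h5).const_mul (-3 * c2))
  -- rewrite the goal
  rw [key t] at hne ⊢
  rw [hDfun, hEfun, hG.deriv]
  -- Step 4: algebra
  set a : ℝ := A ^ ((1:ℝ)/3) with ha_def
  set b : ℝ := (s t) ^ ((1:ℝ)/3) with hb_def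
  have hapos : 0 < a := Real.rpow_pos_of_pos hApos _
  have hbpos : 0 < b := Real.rpow_pos_of_pos (hspos t) _
  have hA3 : A = a ^ (3:ℕ) := (cube_of_rpow hApos).symm
  have hs3 : s t = b ^ (3:ℕ) := (cube_of_rpow (hspos t)).symm
  have r2 : (s t) ^ (-(2:ℝ)/3) = 1 / b ^ (2:ℕ) := rpow_neg_third (hspos t) 2 (by norm_num)
  have r5 : (s t) ^ (-(5:ℝ)/3) = 1 / b ^ (5:ℕ) := rpow_neg_third (hspos t) 5 (by norm_num)
  have r2' : (s t) ^ (-(2:ℝ)/3 - 1) = 1 / b ^ (5:ℕ) := by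
    rw [e2]; exact rpow_neg_third (hspos t) 5 (by norm_num)
  have r5' : (s t) ^ (-(5:ℝ)/3 - 1) = 1 / b ^ (8:ℕ) := by
    rw [e3]; exact rpow_neg_third (hspos t) 8 (by norm_num)
  have ra2 : A ^ (-(2:ℝ)/3) = 1 / a ^ (2:ℕ) := rpow_neg_third hApos 2 (by norm_num)
  have hΔeq : Δ = b ^ (3:ℕ) - 9/4 * (t - B)^2 := by
    rw [← hs3]; simp only [hs_def]; ring
  have hbne : (b:ℝ) ≠ 0 := hbpos.ne'
  have hane : (a:ℝ) ≠ 0 := hapos.ne'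
  have hrab : r R t = a * b := by rw [hr R t]
  rw [hc1, hc2, ra2, r2] at hne
  rw [hrab, hc1, hc2, ra2, r2, r5, r2', r5', hA3, hΔeq]
  have hd : A' * (1 / a ^ (2:ℕ)) / 3 * b + -(3/2) * a * B' * (t - B) * (1 / b ^ (2:ℕ))
      = (2 * A' * b ^ (3:ℕ) - 9 * a ^ (3:ℕ) * B' * (t - B)) / (6 * a ^ (2:ℕ) * b ^ (2:ℕ)) := by
    field_simp
    ring
  rw [hd] at hne ⊢
  have hnum : 2 * A' * b ^ (3:ℕ) - 9 * a ^ (3:ℕ) * B' * (t - B) ≠ 0 := by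
    intro h
    exact hne (by rw [h]; simp)
  field_simp [show 2 * A' * b ^ 3 - a ^ 3 * (t - B) * 9 * B' ≠ 0 by convert hnum using 1; ring]
  ring
end
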